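/- arXiv:2506.23865 — 2 statements merged into one kernel-verified Lean document; each statement's English description precedes it below -/
import Mathlib

section
/- Let (S,*) be an adequate partial semigroup and let A be a J-set in S. Let r ∈ ℕ, let F ∈ P_f(𝓕), and let L ∈ P_f(S). Then there exist m ∈ ℕ, a ∈ S^{m+1}, and t ∈ 𝓙_m such that t(1) > r and for all f ∈ F, (∏_{i=1}^{m} a(i) * f(t(i))) * a(m+1) ∈ A ∩ σ(L). -/
open scoped Classical

namespace PSG

variable {S : Type}

/-- A partial binary operation: `op a b = some c` means the product is defined and equals `c`.
Associativity: `(a*b)*c = a*(b*c)` in the sense that either side is defined iff the other is,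
and then they are equal. -/
def IsPSemigroup (op : S → S → Option S) : Prop :=
  ∀ a b c : S, ((op a b).bind fun x => op x c) = ((op b c).bind fun y => op a y)

/-- commutativity: `a*b = b*a` whenever either side is defined. -/
def IsComm (op : S → S → Option S) : Prop := ∀ a b : S, op a b = op b a

/-- `φ(s) = {t : s*t is defined}` -/
def phiSet (op : S → S → Option S) (s : S) : Set S := {t | (op s t).isSome}

/-- `σ(H) = ⋂_{s ∈ H} φ(s)` -/
def sigmaSet (op : S → S → Option S) (H : Finset S) : Set S := {t | ∀ s ∈ H, (op s t).isSome}

/-- `s⁻¹A = {t ∈ φ(s) : s*t ∈ A}` -/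
def sInv (op : S → S → Option S) (s : S) (A : Set S) : Set S :=
  {t | ∃ v, op s t = some v ∧ v ∈ A}

/-- `(S,*)` is adequate: `σ(H) ≠ ∅` for all `H ∈ P_f(S)`. -/
def IsAdequate (op : S → S → Option S) : Prop :=
  ∀ H : Finset S, H.Nonempty → (sigmaSet op H).Nonempty

/-- sequence a list of options: `some` of the list of values iff all are defined. -/
def seqO {α : Type*} : List (Option α) → Option (List α)
  | [] => some []
  | x :: l => x.bind fun a => (seqO l).map fun r => a :: r

/-- the product of a list of elements, in order; undefined for the empty list. -/
def oprod (op : S → S → Option S) : List S → Option S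
  | [] => none
  | [a] => some a
  | a :: b :: l => (oprod op (b :: l)).bind fun x => op a x

/-- the product of a list of partially-defined elements. -/
def oprodO (op : S → S → Option S) (l : List (Option S)) : Option S :=
  (seqO l).bind (oprod op)

/-- `∏_{t ∈ H} f(t)`, the product in increasing order of indices. -/
def finProd (op : S → S → Option S) (f : ℕ → S) (H : Finset ℕ) : Option S :=
  oprod op ((H.sort (· ≤ ·)).map f)

/-- `f` is an adequate sequence in `(S,*)`. -/
def IsAdequateSeq (op : S → S → Option S) (f : ℕ → S) : Prop :=
  (∀ H : Finset ℕ, H.Nonempty → (finProd op f H).isSome) ∧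
  (∀ F : Finset S, F.Nonempty → ∃ m : ℕ, ∀ H : Finset ℕ, H.Nonempty → (∀ t ∈ H, m ≤ t) →
    ∀ x : S, finProd op f H = some x → x ∈ sigmaSet op F)

/-- `F ∈ P_f(𝓕)`: a nonempty finite set of adequate sequences. -/
def MemPfF (op : S → S → Option S) (F : Finset (ℕ → S)) : Prop :=
  F.Nonempty ∧ ∀ f ∈ F, IsAdequateSeq op f

/-- `(∏_{i=1}^m a(i)*b(i)) * a(m+1)` -/
def jProd (op : S → S → Option S) {m : ℕ} (a : Fin (m + 1) → S) (b : Fin m → S) : Option S :=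
  oprodO op ((List.ofFn fun j : Fin m => op (a j.castSucc) (b j)) ++ [some (a (Fin.last m))])

/-- `A` is a J-set in `(S,*)`. -/
def IsJSet (op : S → S → Option S) (A : Set S) : Prop :=
  ∀ F : Finset (ℕ → S), MemPfF op F → ∀ L : Finset S, L.Nonempty →
    ∃ m : ℕ, 0 < m ∧ ∃ (a : Fin (m + 1) → S) (t : Fin m → ℕ), StrictMono t ∧
      ∀ f ∈ F, ∃ x : S, jProd op a (fun j => f (t j)) = some x ∧ x ∈ A ∧ x ∈ sigmaSet op L

/-- `p ∈ δS`, i.e. `φ(x) ∈ p` for every `x ∈ S` (equivalently `p ∈ ⋂_x cl_{βS} φ(x)`). -/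
def InDelta (op : S → S → Option S) (p : Ultrafilter S) : Prop := ∀ x : S, phiSet op x ∈ p

/-- the collection of sets constituting the product `p*q` of ultrafilters:
`A ∈ p*q ↔ {a : a⁻¹A ∈ q} ∈ p`. -/
def preMul (op : S → S → Option S) (p q : Ultrafilter S) : Set (Set S) :=
  {A : Set S | {a : S | sInv op a A ∈ q} ∈ p}

/-- `p` is an idempotent: `p*p = p` (as collections of sets). -/
def IsIdem (op : S → S → Option S) (p : Ultrafilter S) : Prop :=
  ∀ A : Set S, A ∈ p ↔ A ∈ preMul op p p

/-- `mul` realizes the semigroup operation of `δS`: whenever `q ∈ δS`,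
`mul p q` is the ultrafilter `p*q`. -/
def MulCompat (op : S → S → Option S) (mul : Ultrafilter S → Ultrafilter S → Ultrafilter S) :
    Prop :=
  ∀ p q : Ultrafilter S, InDelta op q → ∀ A : Set S, A ∈ mul p q ↔ A ∈ preMul op p q

/-- a (two-sided) ideal of `(δS,*)`. -/
def IsIdealK (op : S → S → Option S) (mul : Ultrafilter S → Ultrafilter S → Ultrafilter S)
    (I : Set (Ultrafilter S)) : Prop :=
  I.Nonempty ∧ (∀ p ∈ I, InDelta op p) ∧
  (∀ p : Ultrafilter S, InDelta op p → ∀ q ∈ I, mul p q ∈ I) ∧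
  (∀ q ∈ I, ∀ p : Ultrafilter S, InDelta op p → mul q p ∈ I)

/-- `K(δS)`, the smallest two-sided ideal of `δS` (= the intersection of all two-sided ideals). -/
def KSet (op : S → S → Option S) (mul : Ultrafilter S → Ultrafilter S → Ultrafilter S) :
    Set (Ultrafilter S) := ⋂₀ {I | IsIdealK op mul I}

/-- `A` is piecewise syndetic: `cl_{βS}(A) ∩ K(δS) ≠ ∅`. -/
def IsPWSyndetic (op : S → S → Option S) (mul : Ultrafilter S → Ultrafilter S → Ultrafilter S)
    (A : Set S) : Prop := ∃ p : Ultrafilter S, A ∈ p ∧ p ∈ KSet op mul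

/-- `A` is syndetic: `σ(H) ⊆ ⋃_{t∈H} t⁻¹A` for some `H ∈ P_f(S)`. -/
def IsSyndetic (op : S → S → Option S) (A : Set S) : Prop :=
  ∃ H : Finset S, H.Nonempty ∧ sigmaSet op H ⊆ ⋃ t ∈ H, sInv op t A

/-! ### sums in `S ∪ {0}` (`Option S` with `none` playing the role of the adjoined identity `0`) -/

/-- the partial operation on `S ∪ {0}`, with `0 = none` the identity. -/
def zop (op : S → S → Option S) : Option S → Option S → Option (Option S)
  | none, y => some y
  | some a, none => some (some a)
  | some a, some b => (op a b).map some

/-- sum of a list of elements of `S ∪ {0}`; the empty sum is `0`. -/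
def zsum (op : S → S → Option S) (l : List (Option S)) : Option (Option S) :=
  l.foldr (fun x acc => acc.bind fun y => zop op x y) (some none)

/-- sum of a finite family of elements of `S ∪ {0}`. -/
noncomputable def zsumFinset (op : S → S → Option S) {γ : Type*} (A : Finset γ) (g : γ → Option S) :
    Option (Option S) := zsum op (A.toList.map g)

/-- the members of `F_d` (nonempty, of cardinality at most `d`) contained in `α`. -/
def fdSubsets (d : ℕ) (α : Finset ℕ) : Finset (Finset ℕ) :=
  α.powerset.filter fun γ => γ.Nonempty ∧ γ.card ≤ d

/-- `⟨m_γ⟩_{γ ∈ F_d}` generates `⟨v_α⟩` (on indices `α` satisfying `P`):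
`v_α = Σ_{γ ⊆ α, γ ∈ F_d} m_γ`, all the sums being defined (and lying in `S`, not `0`). -/
def GeneratesVIP (op : S → S → Option S) (P : Finset ℕ → Prop) (d : ℕ)
    (m : Finset ℕ → Option S) (v : Finset ℕ → S) : Prop :=
  ∀ α : Finset ℕ, α.Nonempty → P α →
    zsumFinset op (fdSubsets d α) m = some (some (v α))

/-- `⟨v_α⟩` (indexed by the `α` satisfying `P`) is a VIP system. -/
def IsVIP (op : S → S → Option S) (P : Finset ℕ → Prop) (v : Finset ℕ → S) : Prop :=
  ∃ d : ℕ, 0 < d ∧ ∃ m : Finset ℕ → Option S, GeneratesVIP op P d m v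

/-- `{⟨v_α^{(i)}⟩ : i ∈ ι}` is an adequate set of VIP systems (indexed by the `α` with `P α`). -/
def IsAdequateVIPFamily {ι : Type*} (op : S → S → Option S) (P : Finset ℕ → Prop)
    (v : ι → Finset ℕ → S) : Prop :=
  ∃ d t : ℕ, 0 < d ∧ 0 < t ∧
  ∃ (m : ι → Finset ℕ → Option S) (n : Fin t → Finset ℕ → Option S) (E : ι → Finset (Fin t)),
    (∀ i : ι, GeneratesVIP op P d (m i) (v i)) ∧
    (∀ j : Fin t, ∃ u : Finset ℕ → S, GeneratesVIP op P d (n j) u) ∧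
    (∀ H : Finset S, H.Nonempty → ∃ M : ℕ, ∀ l : ℕ, 0 < l → ∀ γ : Fin l → Finset ℕ,
      Function.Injective γ → (∀ j, (γ j).Nonempty ∧ (γ j).card ≤ d) →
      (∀ j, ¬ γ j ⊆ Finset.Iic M) →
      ∃ x : Option S,
        zsumFinset op (Finset.univ : Finset (Fin t × Fin l)) (fun ij => n ij.1 (γ ij.2))
          = some x ∧
        (x = none ∨ ∃ s : S, x = some s ∧ s ∈ sigmaSet op H)) ∧
    (∀ i : ι, ∀ γ : Finset ℕ, γ.Nonempty → γ.card ≤ d →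
      zsumFinset op (E i) (fun j => n j γ) = some (m i γ))

/-- `𝓐` is an adequately partition regular family of subsets of `S`. -/
def AdequatelyPR (op : S → S → Option S) (𝓐 : Set (Set S)) : Prop :=
  ∀ H : Finset S, H.Nonempty → ∀ r : ℕ, 0 < r →
    ∃ F : Finset S, ↑F ⊆ sigmaSet op H ∧
      ∀ C : Fin r → Set S, (↑F : Set S) ⊆ (⋃ j, C j) → ∃ j, ∃ A ∈ 𝓐, A ⊆ C j

/-- `𝓐` is shift invariant: `A + x ∈ 𝓐` for `A ∈ 𝓐`, `x ∈ σ(A)`. -/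
def ShiftInvariant (op : S → S → Option S) (𝓐 : Set (Set S)) : Prop :=
  ∀ A ∈ 𝓐, ∀ x : S, (∀ a ∈ A, (op a x).isSome) →
    {y : S | ∃ a ∈ A, op a x = some y} ∈ 𝓐

end PSG


namespace PSG

variable {S : Type} {op : S → S → Option S}

theorem finProd_comp_add (f : ℕ → S) (k : ℕ) (H : Finset ℕ) :
    finProd op (fun n => f (n + k)) H = finProd op f (H.map (addRightEmbedding k)) := by
  rw [finProd, finProd,
    ← Finset.map_sort _ _ _ _ fun a _ b _ => (add_le_add_iff_right k).symm, List.map_map]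
  rfl

theorem IsAdequateSeq.comp_add {f : ℕ → S} (hf : IsAdequateSeq op f) (k : ℕ) :
    IsAdequateSeq op (fun n => f (n + k)) := by
  refine ⟨fun H hH => ?_, fun F hF => ?_⟩
  · rw [finProd_comp_add]
    exact hf.1 _ hH.map
  · obtain ⟨m, hm⟩ := hf.2 F hF
    refine ⟨m, fun H hH hHm x hx => hm _ hH.map ?_ x (by rwa [finProd_comp_add] at hx)⟩
    simp only [Finset.mem_map, addRightEmbedding_apply, forall_exists_index, and_imp,
      forall_apply_eq_imp_iff₂]
    exact fun t ht => (hHm t ht).trans (Nat.le_add_right t k)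

theorem MemPfF.image_comp_add {F : Finset (ℕ → S)} (hF : MemPfF op F) (k : ℕ) :
    MemPfF op (F.image fun f n => f (n + k)) := by
  refine ⟨hF.1.image _, fun g hg => ?_⟩
  obtain ⟨f, hf, rfl⟩ := Finset.mem_image.1 hg
  exact (hF.2 f hf).comp_add k

end PSG

open PSG in
theorem jset_large_first_index_general {S : Type}
    (op : S → S → Option S)
    (A : Set S) (hA : IsJSet op A) (r : ℕ)
    (F : Finset (ℕ → S)) (hF : MemPfF op F) (L : Finset S) (hL : L.Nonempty) :
    ∃ m : ℕ, ∃ hm : 0 < m, ∃ (a : Fin (m + 1) → S) (t : Fin m → ℕ),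
      StrictMono t ∧ r < t ⟨0, hm⟩ ∧
      ∀ f ∈ F, ∃ x : S, jProd op a (fun j => f (t j)) = some x ∧
        x ∈ A ∧ x ∈ sigmaSet op L := by
  -- Apply the J-set property to the sequences shifted by `r + 1`, then shift the indices back.
  obtain ⟨m, hm, a, t, ht, hmem⟩ := hA _ (hF.image_comp_add (r + 1)) L hL
  exact ⟨m, hm, a, fun j => t j + (r + 1), ht.add_const _, Nat.lt_add_left _ r.lt_succ_self,
    fun f hf => hmem _ (Finset.mem_image_of_mem _ hf)⟩

open PSG in
/-- If `A` is a J-set, the witnesses `t` can be chosen with `t(1) > r`. -/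
theorem jset_large_first_index {S : Type}
    (op : S → S → Option S)
    (hps : IsPSemigroup op) (hadq : IsAdequate op)
    (A : Set S) (hA : IsJSet op A) (r : ℕ)
    (F : Finset (ℕ → S)) (hF : MemPfF op F) (L : Finset S) (hL : L.Nonempty) :
    ∃ m : ℕ, ∃ hm : 0 < m, ∃ (a : Fin (m + 1) → S) (t : Fin m → ℕ),
      StrictMono t ∧ r < t ⟨0, hm⟩ ∧
      ∀ f ∈ F, ∃ x : S, jProd op a (fun j => f (t j)) = some x ∧
        x ∈ A ∧ x ∈ sigmaSet op L :=
  jset_large_first_index_general op A hA r F hF L hL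
end

section
/- Let (S,*) be an adequate partial semigroup and let A ⊆ S be piecewise syndetic. Then there exists H ∈ P_f(S) such that for every nonempty finite set T ⊆ σ(H), there exists x ∈ σ(T) such that T*x := {t*x : t ∈ T} ⊆ ⋃_{t∈H} t⁻¹A. -/
open scoped Classical

/-
Let `p ∈ K(δS)` with `A ∈ p`; then `p` lies in a minimal closed left ideal `L` of `δS`. For every
`q ∈ δS` the closed left ideal `δS * (q * p)` lies inside `L`, so `p = r * (q * p)` for some
`r ∈ δS`, and unwinding the product shows that `q` contains `D a = {b : b⁻¹(a⁻¹A) ∈ p}` for some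
`a ∈ S`. By compactness of `δS`, some `σ(H₀)` is covered by finitely many `D a`, `a ∈ G`. Then
`H = H₀ ∪ G` works: for `T ⊆ σ(H)` the set `⋂_{t ∈ T} ⋃_{a ∈ G} t⁻¹(a⁻¹A)` belongs to `p`, and
any of its elements is a suitable `x`.
-/

open Set Filter

namespace PSG

variable {S : Type} {op : S → S → Option S}

theorem IsPSemigroup.exists_assoc_iff (hps : IsPSemigroup op) (a b c w : S) :
    (∃ ab, op a b = some ab ∧ op ab c = some w) ↔
      ∃ bc, op b c = some bc ∧ op a bc = some w := by
  rw [← Option.bind_eq_some_iff, ← Option.bind_eq_some_iff, hps a b c]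

theorem phiSet_eq_sInv_univ (s : S) : phiSet op s = sInv op s univ := by
  ext t
  simp [phiSet, sInv, Option.isSome_iff_exists]

theorem sigmaSet_eq_biInter (H : Finset S) : sigmaSet op H = ⋂ s ∈ H, phiSet op s := by
  ext t
  simp [sigmaSet, phiSet]

theorem sigmaSet_nonempty [Nonempty S] (hadq : IsAdequate op) (H : Finset S) :
    (sigmaSet op H).Nonempty := by
  rcases H.eq_empty_or_nonempty with rfl | hH
  · exact ⟨Classical.arbitrary S, by simp [sigmaSet]⟩
  · exact hadq H hH

theorem sInv_sInv (hps : IsPSemigroup op) {b c v : S} (h : op b c = some v) (A : Set S) :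
    sInv op c (sInv op b A) = sInv op v A := by
  ext t
  constructor
  · rintro ⟨y, hct, w, hby, hw⟩
    obtain ⟨bc, hbc, hv⟩ := (hps.exists_assoc_iff b c t w).mpr ⟨y, hct, hby⟩
    obtain rfl : v = bc := Option.some_inj.mp (h.symm.trans hbc)
    exact ⟨w, hv, hw⟩
  · rintro ⟨w, hvt, hw⟩
    obtain ⟨y, hct, hby⟩ := (hps.exists_assoc_iff b c t w).mp ⟨v, h, hvt⟩
    exact ⟨y, hct, w, hby, hw⟩

theorem sInv_setOf_sInv_mem (hps : IsPSemigroup op) (r : Ultrafilter S) (b : S) (A : Set S) :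
    sInv op b {a | sInv op a A ∈ r} = {c | sInv op c (sInv op b A) ∈ r} := by
  ext c
  constructor
  · rintro ⟨v, hbc, hv⟩
    rwa [mem_ofPred_eq, sInv_sInv hps hbc]
  · intro hc
    obtain ⟨t, y, hct, w, hby, -⟩ := Ultrafilter.nonempty_of_mem hc
    obtain ⟨v, hbc, -⟩ := (hps.exists_assoc_iff b c t w).mpr ⟨y, hct, hby⟩
    exact ⟨v, hbc, by rwa [mem_ofPred_eq, ← sInv_sInv hps hbc]⟩

def delta (op : S → S → Option S) : Set (Ultrafilter S) := {u | InDelta op u}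

def deltaFilter (op : S → S → Option S) : Filter S := ⨅ x, 𝓟 (phiSet op x)

theorem mem_delta_iff_le {u : Ultrafilter S} : u ∈ delta op ↔ ↑u ≤ deltaFilter op := by
  simp [delta, InDelta, deltaFilter]

theorem mem_deltaFilter_iff {s : Set S} :
    s ∈ deltaFilter op ↔ ∃ H : Finset S, sigmaSet op H ⊆ s := by
  simp only [deltaFilter, (hasBasis_iInf_principal_finite _).mem_iff,
    exists_finite_iff_finset, Finset.set_biInter_coe, sigmaSet_eq_biInter]

theorem delta_nonempty [Nonempty S] (hadq : IsAdequate op) : (delta op).Nonempty := by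
  have : (deltaFilter op).NeBot := forall_mem_nonempty_iff_neBot.mp fun s hs => by
    obtain ⟨H, hH⟩ := mem_deltaFilter_iff.mp hs
    exact (sigmaSet_nonempty hadq H).mono hH
  obtain ⟨u, hu⟩ := Ultrafilter.exists_le (deltaFilter op)
  exact ⟨u, mem_delta_iff_le.mpr hu⟩

theorem isClosed_delta : IsClosed (delta op) := by
  simpa only [delta, InDelta, ofPred_forall] using
    isClosed_iInter fun x => ultrafilter_isClosed_basic (phiSet op x)

theorem exists_sigmaSet_subset_biUnion {ι : Type*} {D : ι → Set S}
    (h : ∀ q ∈ delta op, ∃ i, D i ∈ q) :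
    ∃ (H : Finset S) (G : Finset ι), sigmaSet op H ⊆ ⋃ i ∈ G, D i := by
  obtain ⟨G, hG⟩ := isClosed_delta.isCompact.elim_finite_subcover
    (fun i => {u : Ultrafilter S | D i ∈ u}) (fun i => ultrafilter_isOpen_basic _)
    fun q hq => mem_iUnion.mpr (h q hq)
  have hmem : ⋃ i ∈ G, D i ∈ deltaFilter op := mem_iff_ultrafilter.mpr fun q hq => by
    obtain ⟨i, hi, hDi⟩ := mem_iUnion₂.mp (hG (mem_delta_iff_le.mpr hq))
    exact mem_of_superset hDi (subset_biUnion_of_mem hi)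
  obtain ⟨H, hH⟩ := mem_deltaFilter_iff.mp hmem
  exact ⟨H, G, hH⟩

variable {mul : Ultrafilter S → Ultrafilter S → Ultrafilter S}

theorem mem_mul_iff (hmul : MulCompat op mul) {p q : Ultrafilter S} (hq : q ∈ delta op)
    {A : Set S} : A ∈ mul p q ↔ {a | sInv op a A ∈ q} ∈ p :=
  hmul p q hq A

theorem mul_mem_delta (hps : IsPSemigroup op) (hmul : MulCompat op mul) {u v : Ultrafilter S}
    (hu : u ∈ delta op) (hv : v ∈ delta op) : mul u v ∈ delta op := by
  intro x
  rw [mem_mul_iff hmul hv]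
  refine mem_of_superset (hu x) fun a ha => ?_
  obtain ⟨xa, hxa⟩ := Option.isSome_iff_exists.mp ha
  show sInv op a (phiSet op x) ∈ v
  rw [phiSet_eq_sInv_univ, sInv_sInv hps hxa, ← phiSet_eq_sInv_univ]
  exact hv xa

theorem mul_assoc_of_mem_delta (hps : IsPSemigroup op) (hmul : MulCompat op mul)
    (u : Ultrafilter S) {v w : Ultrafilter S} (hv : v ∈ delta op) (hw : w ∈ delta op) :
    mul (mul u v) w = mul u (mul v w) := by
  ext A
  rw [mem_mul_iff hmul hw, mem_mul_iff hmul hv,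
    mem_mul_iff hmul (mul_mem_delta hps hmul hv hw)]
  simp_rw [sInv_setOf_sInv_mem hps w, mem_mul_iff hmul hw]

theorem continuous_mul_right (hmul : MulCompat op mul) {v : Ultrafilter S} (hv : v ∈ delta op) :
    Continuous (mul · v) := by
  refine ultrafilterBasis_is_basis.continuous_iff.mpr ?_
  rintro _ ⟨A, rfl⟩
  have hpre : (mul · v) ⁻¹' {w | A ∈ w} = {u | {a | sInv op a A ∈ v} ∈ u} :=
    ext fun u => mem_mul_iff hmul hv
  rw [hpre]
  exact ultrafilter_isOpen_basic _

structure IsClosedLeftIdeal (op : S → S → Option S)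
    (mul : Ultrafilter S → Ultrafilter S → Ultrafilter S) (L : Set (Ultrafilter S)) : Prop where
  nonempty : L.Nonempty
  subset_delta : L ⊆ delta op
  isClosed : IsClosed L
  mul_mem : ∀ u ∈ delta op, ∀ x ∈ L, mul u x ∈ L

theorem isClosedLeftIdeal_delta (hps : IsPSemigroup op) (hmul : MulCompat op mul)
    (hne : (delta op).Nonempty) : IsClosedLeftIdeal op mul (delta op) :=
  ⟨hne, subset_rfl, isClosed_delta, fun _ hu _ hx => mul_mem_delta hps hmul hu hx⟩

theorem IsClosedLeftIdeal.image_mul_right (hps : IsPSemigroup op) (hmul : MulCompat op mul)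
    {L : Set (Ultrafilter S)} (hL : IsClosedLeftIdeal op mul L) {v : Ultrafilter S}
    (hv : v ∈ delta op) : IsClosedLeftIdeal op mul ((mul · v) '' L) where
  nonempty := hL.nonempty.image _
  subset_delta := by
    rintro _ ⟨u, hu, rfl⟩
    exact mul_mem_delta hps hmul (hL.subset_delta hu) hv
  isClosed := (hL.isClosed.isCompact.image (continuous_mul_right hmul hv)).isClosed
  mul_mem := by
    rintro u hu _ ⟨x, hx, rfl⟩
    exact ⟨mul u x, hL.mul_mem u hu x hx,
      mul_assoc_of_mem_delta hps hmul u (hL.subset_delta hx) hv⟩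

theorem isClosedLeftIdeal_sInter {c : Set (Set (Ultrafilter S))}
    (hc : ∀ L ∈ c, IsClosedLeftIdeal op mul L) (hchain : IsChain (· ⊆ ·) c) (hne : c.Nonempty) :
    IsClosedLeftIdeal op mul (⋂₀ c) where
  nonempty := by
    have : Nonempty c := hne.to_subtype
    exact IsCompact.nonempty_sInter_of_directed_nonempty_isCompact_isClosed
      (fun L hL L' hL' => (hchain.total hL hL').elim (fun h => ⟨L, hL, subset_rfl, h⟩)
        fun h => ⟨L', hL', h, subset_rfl⟩)
      (fun L hL => (hc L hL).nonempty)
      (fun L hL => (hc L hL).isClosed.isCompact) fun L hL => (hc L hL).isClosed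
  subset_delta := by
    obtain ⟨L, hL⟩ := hne
    exact (sInter_subset_of_mem hL).trans (hc L hL).subset_delta
  isClosed := isClosed_sInter fun L hL => (hc L hL).isClosed
  mul_mem u hu x hx := mem_sInter.mpr fun L hL => (hc L hL).mul_mem u hu x (hx L hL)

theorem exists_minimal_isClosedLeftIdeal (hps : IsPSemigroup op) (hmul : MulCompat op mul)
    (hne : (delta op).Nonempty) : ∃ L, Minimal (IsClosedLeftIdeal op mul) L := by
  obtain ⟨L, -, hL⟩ := zorn_superset_nonempty {L | IsClosedLeftIdeal op mul L}
    (fun c hc hchain hne => ⟨⋂₀ c, isClosedLeftIdeal_sInter hc hchain hne,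
      fun _ => sInter_subset_of_mem⟩)
    _ (isClosedLeftIdeal_delta hps hmul hne)
  exact ⟨L, hL⟩

theorem minimal_image_mul_right (hps : IsPSemigroup op) (hmul : MulCompat op mul)
    {L : Set (Ultrafilter S)} (hL : Minimal (IsClosedLeftIdeal op mul) L) {v : Ultrafilter S}
    (hv : v ∈ delta op) : Minimal (IsClosedLeftIdeal op mul) ((mul · v) '' L) := by
  refine ⟨hL.prop.image_mul_right hps hmul hv, fun L' hL' hsub => ?_⟩
  -- `{x ∈ L | x * v ∈ L'}` is a closed left ideal inside `L`, hence all of `L`.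
  have hM : IsClosedLeftIdeal op mul (L ∩ (mul · v) ⁻¹' L') := by
    refine ⟨?_, inter_subset_left.trans hL.prop.subset_delta,
      hL.prop.isClosed.inter (hL'.isClosed.preimage (continuous_mul_right hmul hv)), ?_⟩
    · obtain ⟨_, hy⟩ := hL'.nonempty
      obtain ⟨x, hx, rfl⟩ := hsub hy
      exact ⟨x, hx, hy⟩
    · rintro u hu x ⟨hxL, hxL'⟩
      refine ⟨hL.prop.mul_mem u hu x hxL, ?_⟩
      show mul (mul u x) v ∈ L'
      rw [mul_assoc_of_mem_delta hps hmul u (hL.prop.subset_delta hxL) hv]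
      exact hL'.mul_mem u hu _ hxL'
  rw [← hL.eq_of_subset hM inter_subset_left]
  rintro _ ⟨x, ⟨-, hx⟩, rfl⟩
  exact hx

theorem exists_mul_mul_eq_of_minimal (hps : IsPSemigroup op) (hmul : MulCompat op mul)
    {L : Set (Ultrafilter S)} (hL : Minimal (IsClosedLeftIdeal op mul) L) {p q : Ultrafilter S}
    (hp : p ∈ L) (hq : q ∈ delta op) : ∃ r ∈ delta op, mul r (mul q p) = p := by
  have hqp : mul q p ∈ L := hL.prop.mul_mem q hq p hp
  have hsub : (mul · (mul q p)) '' delta op ⊆ L := by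
    rintro _ ⟨r, hr, rfl⟩
    exact hL.prop.mul_mem r hr _ hqp
  have hideal := (isClosedLeftIdeal_delta hps hmul ⟨q, hq⟩).image_mul_right hps hmul
    (hL.prop.subset_delta hqp)
  rw [← hL.eq_of_subset hideal hsub] at hp
  exact hp

def minimalLeftIdealsUnion (op : S → S → Option S)
    (mul : Ultrafilter S → Ultrafilter S → Ultrafilter S) : Set (Ultrafilter S) :=
  {u | ∃ L, Minimal (IsClosedLeftIdeal op mul) L ∧ u ∈ L}

theorem isIdealK_minimalLeftIdealsUnion (hps : IsPSemigroup op) (hmul : MulCompat op mul)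
    (hne : (delta op).Nonempty) : IsIdealK op mul (minimalLeftIdealsUnion op mul) := by
  obtain ⟨L, hL⟩ := exists_minimal_isClosedLeftIdeal hps hmul hne
  refine ⟨?_, ?_, ?_, ?_⟩
  · obtain ⟨u, hu⟩ := hL.prop.nonempty
    exact ⟨u, L, hL, hu⟩
  · rintro p ⟨L, hL, hp⟩
    exact hL.prop.subset_delta hp
  · rintro p hp q ⟨L, hL, hq⟩
    exact ⟨L, hL, hL.prop.mul_mem p hp q hq⟩
  · rintro q ⟨L, hL, hq⟩ p hp
    exact ⟨_, minimal_image_mul_right hps hmul hL hp, q, hq, rfl⟩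

theorem exists_setOf_sInv_sInv_mem (hps : IsPSemigroup op) (hadq : IsAdequate op)
    (hmul : MulCompat op mul) {A : Set S} {p q : Ultrafilter S} (hA : A ∈ p)
    (hp : p ∈ KSet op mul) (hq : q ∈ delta op) :
    ∃ a, {b | sInv op b (sInv op a A) ∈ p} ∈ q := by
  have : Nonempty S := nonempty_of_neBot (p : Filter S)
  obtain ⟨L, hL, hpL⟩ : p ∈ minimalLeftIdealsUnion op mul :=
    hp _ (isIdealK_minimalLeftIdealsUnion hps hmul (delta_nonempty hadq))
  have hpΔ := hL.prop.subset_delta hpL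
  obtain ⟨r, -, hr⟩ := exists_mul_mul_eq_of_minimal hps hmul hL hpL hq
  rw [← hr, mem_mul_iff hmul (mul_mem_delta hps hmul hq hpΔ)] at hA
  obtain ⟨a, ha⟩ := Ultrafilter.nonempty_of_mem hA
  exact ⟨a, (mem_mul_iff hmul hpΔ).mp ha⟩

end PSG

open PSG in
/-- If `A` is piecewise syndetic there is `H ∈ P_f(S)` such that every finite nonempty
`T ⊆ σ(H)` admits `x ∈ σ(T)` with `T*x ⊆ ⋃_{t ∈ H} t⁻¹A`. -/
theorem piecewise_syndetic_lemma {S : Type}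
    (op : S → S → Option S) (hps : IsPSemigroup op) (hadq : IsAdequate op)
    (mul : Ultrafilter S → Ultrafilter S → Ultrafilter S) (hmul : MulCompat op mul)
    (A : Set S) (hA : IsPWSyndetic op mul A) :
    ∃ H : Finset S, H.Nonempty ∧
      ∀ T : Finset S, T.Nonempty → ↑T ⊆ sigmaSet op H →
        ∃ x ∈ sigmaSet op T, ∀ t ∈ T, ∃ v : S, op t x = some v ∧
          v ∈ ⋃ u ∈ H, sInv op u A := by
  obtain ⟨p, hAp, hpK⟩ := hA
  have : Nonempty S := nonempty_of_neBot (p : Filter S)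
  obtain ⟨H, G, hcover⟩ := exists_sigmaSet_subset_biUnion fun q hq =>
    exists_setOf_sInv_sInv_mem hps hadq hmul hAp hpK hq
  have hG : G.Nonempty := by
    obtain ⟨a, ha, -⟩ := mem_iUnion₂.mp (hcover (sigmaSet_nonempty hadq H).some_mem)
    exact ⟨a, ha⟩
  refine ⟨H ∪ G, hG.mono Finset.subset_union_right, fun T _ hT => ?_⟩
  have hlarge : (⋂ t ∈ T, ⋃ a ∈ G, sInv op t (sInv op a A)) ∈ p := by
    refine (biInter_finset_mem T).mpr fun t ht => ?_
    obtain ⟨a, ha, hta⟩ := mem_iUnion₂.mp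
      (hcover fun s hs => hT ht s (Finset.mem_union_left _ hs))
    exact mem_of_superset hta (subset_iUnion₂_of_subset a ha subset_rfl)
  obtain ⟨x, hx⟩ := Ultrafilter.nonempty_of_mem hlarge
  have hTx : ∀ t ∈ T, ∃ a ∈ G, x ∈ sInv op t (sInv op a A) := fun t ht => by
    obtain ⟨a, ha, hxa⟩ := mem_iUnion₂.mp (mem_iInter₂.mp hx t ht)
    exact ⟨a, ha, hxa⟩
  refine ⟨x, fun t ht => ?_, fun t ht => ?_⟩
  · obtain ⟨-, -, v, hv, -⟩ := hTx t ht
    exact Option.isSome_iff_exists.mpr ⟨v, hv⟩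
  · obtain ⟨a, ha, v, hv, hvA⟩ := hTx t ht
    exact ⟨v, hv, mem_biUnion (Finset.mem_union_right _ ha) hvA⟩
end
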